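/- Assume Γ is the path graph on {1,…,r}. Every simple (non-self-intersecting) directed cycle C of the BFZ quiver Q^{u,e} that is not itself a face is differentiable with respect to some arrow: there exist a face F of Q^{u,e} and an arrow e of F such that e does not lie on C and the arrows of F other than e form a consecutive directed subpath of C. -/

import Mathlib

/-!  Berenstein–Fomin–Zelevinsky quivers `Q^{u,e}` as combinatorial data.

`r` is the number of nodes of the Dynkin diagram `Γ` (a finite simple graph whose
relevant nodes are `1, …, r`), `n` is the length of the reduced word
`i = (i_1, …, i_n)` for the Weyl group element `u` (and `v = e`, so every letter has
sign `-1`), `node k = i_k` is the node of the letter at position `k` (extended by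
`node (-p) = p` for `p = 1, …, r`), and `succ k = k⁺` is the successor map. -/
structure BFZe where
  r : ℤ
  n : ℤ
  Γ : SimpleGraph ℤ
  node : ℤ → ℤ
  succ : ℤ → ℤ

namespace BFZe

variable (S : BFZe)

/-- The index (vertex) set `[-r, -1] ∪ [1, n]`. -/
def Idx (k : ℤ) : Prop := (-S.r ≤ k ∧ k ≤ -1) ∨ (1 ≤ k ∧ k ≤ S.n)

/-- The axioms on the data: `r ≥ 1`, `node (-p) = p`, the nodes of the letters lie in
`{1, …, r}`, and `succ k` is the least index `l > k` with `node l = node k`, or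
`n + 1` if there is no such index. -/
def Valid : Prop :=
  1 ≤ S.r ∧ 0 ≤ S.n ∧
  (∀ p : ℤ, 1 ≤ p → p ≤ S.r → S.node (-p) = p) ∧
  (∀ k : ℤ, 1 ≤ k → k ≤ S.n → 1 ≤ S.node k ∧ S.node k ≤ S.r) ∧
  (∀ k : ℤ, S.Idx k →
    k < S.succ k ∧ S.succ k ≤ S.n + 1 ∧
    (S.succ k ≤ S.n → S.Idx (S.succ k) ∧ S.node (S.succ k) = S.node k) ∧
    (∀ l : ℤ, S.Idx l → k < l → S.node l = S.node k → S.succ k ≤ l))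

open scoped Classical in
/-- The Coxeter matrix of the Weyl group of the symmetric Kac–Moody algebra with
Dynkin diagram `Γ`:  `m_{ab} = 3` if `a` and `b` are adjacent in `Γ` and `m_{ab} = 2`
otherwise (for `a ≠ b`). -/
noncomputable def coxeterMatrix : CoxeterMatrix ℤ where
  M := Matrix.of fun a b : ℤ => if a = b then 1 else if S.Γ.Adj a b then 3 else 2
  isSymm := by
    rw [Matrix.IsSymm]
    ext a b
    by_cases h : a = b
    · simp [h]
    · simp only [Matrix.transpose_apply, Matrix.of_apply, if_neg h, if_neg (Ne.symm h)]
      rw [S.Γ.adj_comm]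
  diagonal := by intro b; simp
  off_diagonal := by
    intro a b h
    simp only [Matrix.of_apply, if_neg h]
    split <;> omega

/-- The word `(i_1, …, i_n)`, as a list of nodes of `Γ`. -/
def word : List ℤ := (List.range S.n.toNat).map (fun j => S.node ((j : ℤ) + 1))

/-- The word `i` is a reduced word (for the Weyl group element `u`) in the Weyl
(Coxeter) group associated to `Γ`. -/
noncomputable def Reduced : Prop :=
  (CoxeterMatrix.toCoxeterSystem S.coxeterMatrix).IsReduced S.word

/-- There is a horizontal arrow from `x` to `y`:  these are the arrows `k⁺ → k` for
`k` in the index set with `k⁺ ≤ n`. -/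
def HorArrow (x y : ℤ) : Prop := S.Idx y ∧ x = S.succ y ∧ x ≤ S.n

/-- There is an inclined arrow from `x` to `y`:  these are the arrows `k → l` with
`|i_k|` and `|i_l|` adjacent in `Γ` and `k < l < k⁺ < l⁺`. -/
def InclArrow (x y : ℤ) : Prop :=
  S.Idx x ∧ S.Idx y ∧ S.Γ.Adj (S.node x) (S.node y) ∧
  x < y ∧ y < S.succ x ∧ S.succ x < S.succ y

/-- The arrows of the BFZ quiver `Q^{u,e}`. -/
def Arrow (x y : ℤ) : Prop := S.HorArrow x y ∨ S.InclArrow x y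

/-- A face of `Q^{u,e}`: a chordless cycle `c : ZMod N → ℤ` (with `N ≥ 3`) of the
underlying undirected graph, i.e. consecutive vertices are joined by an arrow and no
arrow of `Q^{u,e}` joins two non-consecutive vertices. -/
def IsFace {N : ℕ} (c : ZMod N → ℤ) : Prop :=
  3 ≤ N ∧ Function.Injective c ∧
  (∀ t : ZMod N, S.Arrow (c t) (c (t + 1)) ∨ S.Arrow (c (t + 1)) (c t)) ∧
  (∀ s t : ZMod N, s ≠ t → t ≠ s + 1 → s ≠ t + 1 → ¬ S.Arrow (c s) (c t))

/-- `Γ` is the path graph (type `A_r` Dynkin diagram) on `{1, …, r}`. -/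
def IsPathGraph : Prop :=
  ∀ a b : ℤ, S.Γ.Adj a b ↔
    (1 ≤ a ∧ 1 ≤ b ∧ a ≤ S.r ∧ b ≤ S.r ∧ (b = a + 1 ∨ a = b + 1))

/-- The type of arrows of the quiver `Q^{u,e}`. -/
def Arr : Type := { p : ℤ × ℤ // S.Arrow p.1 p.2 }

/-- The source vertex of an arrow. -/
def asrc (e : S.Arr) : ℤ := e.1.1

/-- The target vertex of an arrow. -/
def atgt (e : S.Arr) : ℤ := e.1.2

/-- The product in the free associative `ℂ`-algebra on the arrows corresponding to a
list of arrows (the monomial of a path). -/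
noncomputable def pathProd (L : List S.Arr) : FreeAlgebra ℂ S.Arr :=
  (L.map (FreeAlgebra.ι ℂ)).prod

/-- A list of arrows is a path: consecutive arrows are composable. -/
def IsPathList (L : List S.Arr) : Prop :=
  L.Chain' (fun e f => S.atgt e = S.asrc f)

/-- A nonempty composable list of arrows closing up to a cycle; its monomial
`e_1 ⋯ e_N` is a cyclic monomial. -/
def IsCycList (L : List S.Arr) : Prop :=
  L ≠ [] ∧ S.IsPathList L ∧
  ∀ e ∈ L.head?, ∀ f ∈ L.getLast?, S.atgt f = S.asrc e

/-- The linear span of all `w - rot w` for cyclic monomials `w`; two elements of the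
free algebra are cyclically equivalent iff their difference lies in this span. -/
noncomputable def cycSpan : Submodule ℂ (FreeAlgebra ℂ S.Arr) :=
  Submodule.span ℂ
    {x | ∃ L : List S.Arr, S.IsCycList L ∧ x = S.pathProd L - S.pathProd (L.rotate 1)}

open scoped Classical in
/-- The cyclic derivative with respect to the arrow `a` of the cyclic monomial given
by the list `L = e_1 ⋯ e_N`:  `∑_{j : e_j = a} e_{j+1} ⋯ e_N e_1 ⋯ e_{j-1}`. -/
noncomputable def cycDeriv (a : S.Arr) (L : List S.Arr) : FreeAlgebra ℂ S.Arr :=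
  ∑ j ∈ Finset.range L.length,
    if L[j]? = some a then S.pathProd (L.drop (j + 1) ++ L.take j) else 0

/-- A face of `Q^{u,e}` as a directed cyclic list of arrows: a directed cycle visiting
no vertex twice such that any arrow of `Q^{u,e}` joining two of its vertices is one of
the (cyclically consecutive) arrows of the cycle, i.e. the cycle is chordless in the
underlying undirected graph. -/
def IsFaceList (L : List S.Arr) : Prop :=
  S.IsCycList L ∧ (L.map S.asrc).Nodup ∧
  ∀ x y : ℤ, x ∈ L.map S.asrc → y ∈ L.map S.asrc → S.Arrow x y →
    ∃ e ∈ L, S.asrc e = x ∧ S.atgt e = y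

/-- `FS` is a complete set of representatives of the faces of `Q^{u,e}`, each face
being listed exactly once up to rotation. -/
def FaceReps (FS : Finset (List S.Arr)) : Prop :=
  (∀ L ∈ FS, S.IsFaceList L) ∧
  (∀ L : List S.Arr, S.IsFaceList L → ∃ L' ∈ FS, ∃ j : ℕ, L.rotate j = L') ∧
  (∀ L ∈ FS, ∀ L' ∈ FS, (∃ j : ℕ, L.rotate j = L') → L = L')

/-- The cyclic derivative with respect to the arrow `a` of the potential
`∑_L eps L • w_L`, `L` ranging over the face representatives `FS`. -/
noncomputable def potDeriv (FS : Finset (List S.Arr)) (eps : List S.Arr → ℂ)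
    (a : S.Arr) : FreeAlgebra ℂ S.Arr :=
  ∑ L ∈ FS, eps L • S.cycDeriv a L

/-- The Jacobian ideal of the potential `∑_L eps L • w_L`: the two-sided ideal
generated by its cyclic derivatives. -/
noncomputable def jacIdeal (FS : Finset (List S.Arr)) (eps : List S.Arr → ℂ) :
    Submodule ℂ (FreeAlgebra ℂ S.Arr) :=
  Submodule.span ℂ
    {x | ∃ (p q : FreeAlgebra ℂ S.Arr) (a : S.Arr), x = p * S.potDeriv FS eps a * q}

/-- The quiver with potential `(Q^{u,e}, ∑_L eps L • w_L)` is rigid: every cyclic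
monomial is cyclically equivalent to an element of the Jacobian ideal. -/
def IsRigid (FS : Finset (List S.Arr)) (eps : List S.Arr → ℂ) : Prop :=
  ∀ L : List S.Arr, S.IsCycList L →
    ∃ y ∈ S.jacIdeal FS eps, S.pathProd L - y ∈ S.cycSpan

/-- The data describing the faces of `Q^{u,e}` in the path-graph (type A) case:
`aF L` is the node of the string containing all but one vertex of the face `L`, and
`bF L` is the node of the string containing the remaining lone vertex. -/
def FaceNodes (FS : Finset (List S.Arr)) (aF bF : List S.Arr → ℤ) : Prop :=
  ∀ L ∈ FS,
    S.Γ.Adj (aF L) (bF L) ∧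
    (∀ x ∈ L.map S.asrc, S.node x = aF L ∨ S.node x = bF L) ∧
    (∃! x, x ∈ L.map S.asrc ∧ S.node x = bF L)

/-- The orientation sign `ε(F)` of a face: `+1` if `b(F) > a(F)`, `-1` otherwise. -/
noncomputable def faceEps (aF bF : List S.Arr → ℤ) (L : List S.Arr) : ℂ :=
  if aF L < bF L then 1 else -1

/-!
Let `g : x → y` be an inclined arrow of `C` whose source `x` is largest. Horizontal arrows
descend a string, so after `g` the cycle goes down the string of `y`: it cannot take an
inclined arrow while above `x` (maximality of `x`) and cannot pass through `x` (another
string), so it reaches a first vertex `t < x`. Since `t⁺` is the previous vertex, above `x`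
and at most `y < x⁺`, there is an inclined arrow `t → x`; together with `g` and the descent it
bounds a face. If `t → x` lay on `C`, simplicity would force `C` to be this face.
-/

theorem _root_.List.exists_rotate_eq_cons_of_mem {α : Type*} {l : List α} {a : α}
    (h : a ∈ l) : ∃ n l', l.rotate n = a :: l' := by
  obtain ⟨l₁, l₂, rfl⟩ := List.append_of_mem h
  obtain ⟨n, hn⟩ := (List.isRotated_append : (l₁ ++ a :: l₂) ~r a :: (l₂ ++ l₁))
  exact ⟨n, _, hn⟩

section

variable {S}

lemma lt_succ (hS : S.Valid) {k : ℤ} (hk : S.Idx k) : k < S.succ k :=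
  (hS.2.2.2.2 k hk).1

lemma HorArrow.lt (hS : S.Valid) {u v : ℤ} (h : S.HorArrow u v) : v < u :=
  h.2.1 ▸ lt_succ hS h.1

lemma HorArrow.node_eq (hS : S.Valid) {u v : ℤ} (h : S.HorArrow u v) :
    S.node u = S.node v := by
  obtain ⟨hv, rfl, hn⟩ := h
  exact ((hS.2.2.2.2 v hv).2.2.1 hn).2

def IsPathFrom : ℤ → ℤ → List S.Arr → Prop
  | u, v, [] => u = v
  | u, v, f :: L => S.asrc f = u ∧ IsPathFrom (S.atgt f) v L

@[simp] lemma isPathFrom_nil {u v : ℤ} : IsPathFrom u v ([] : List S.Arr) ↔ u = v := Iff.rfl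

@[simp] lemma isPathFrom_cons {u v : ℤ} {f : S.Arr} {L : List S.Arr} :
    IsPathFrom u v (f :: L) ↔ S.asrc f = u ∧ IsPathFrom (S.atgt f) v L := Iff.rfl

lemma isPathFrom_append {u w : ℤ} {L M : List S.Arr} :
    IsPathFrom u w (L ++ M) ↔ ∃ v, IsPathFrom u v L ∧ IsPathFrom v w M := by
  induction L generalizing u with
  | nil => simp
  | cons f L ih => simp [ih, and_assoc]

lemma isPathList_and_getLast_iff {g : S.Arr} {L : List S.Arr} {v : ℤ} :
    S.IsPathList (g :: L) ∧ S.atgt ((g :: L).getLast (List.cons_ne_nil g L)) = v ↔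
      IsPathFrom (S.atgt g) v L := by
  induction L generalizing g with
  | nil => simp [IsPathList, List.Chain']
  | cons f L ih =>
    simp only [IsPathList, List.Chain', List.isChain_cons_cons, List.getLast_cons_cons,
      isPathFrom_cons, ← ih, eq_comm (a := S.asrc f)]
    tauto

lemma isCycList_cons_iff {g : S.Arr} {L : List S.Arr} :
    S.IsCycList (g :: L) ↔ IsPathFrom (S.atgt g) (S.asrc g) L := by
  rw [← isPathList_and_getLast_iff, IsCycList,
    List.getLast?_eq_some_getLast (List.cons_ne_nil g L)]
  simp [eq_comm]

lemma isCycList_iff {C : List S.Arr} : S.IsCycList C ↔ C ≠ [] ∧ ∃ u, IsPathFrom u u C := by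
  cases C with
  | nil => simp [IsCycList]
  | cons g L => simp [isCycList_cons_iff]

lemma IsCycList.rotate {C : List S.Arr} (hC : S.IsCycList C) (n : ℕ) :
    S.IsCycList (C.rotate n) := by
  obtain ⟨hne, u, hu⟩ := isCycList_iff.1 hC
  rw [← List.take_append_drop (n % C.length) C, isPathFrom_append] at hu
  obtain ⟨v, hL, hM⟩ := hu
  refine isCycList_iff.2 ⟨by simpa using hne, v, ?_⟩
  rw [List.rotate_eq_drop_append_take_mod, isPathFrom_append]
  exact ⟨u, hM, hL⟩

lemma IsFaceList.isRotated {F C : List S.Arr} (hF : S.IsFaceList F) (h : F ~r C) :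
    S.IsFaceList C := by
  obtain ⟨hcyc, hnd, hchord⟩ := hF
  obtain ⟨n, rfl⟩ := h
  refine ⟨hcyc.rotate n, ?_, fun x y hx hy hxy => ?_⟩
  · rwa [List.map_rotate, List.nodup_rotate]
  · rw [List.map_rotate, List.mem_rotate] at hx hy
    simpa only [List.mem_rotate] using hchord x y hx hy hxy

lemma IsPathFrom.mem_asrc_or_eq_iff {u v w : ℤ} {L : List S.Arr} (h : IsPathFrom u v L) :
    w ∈ L.map S.asrc ∨ w = v ↔ w = u ∨ w ∈ L.map S.atgt := by
  induction L generalizing u with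
  | nil => simp [show u = v from h]
  | cons f L ih =>
    obtain ⟨rfl, hL⟩ := h
    simp only [List.map_cons, List.mem_cons]
    rw [or_assoc, ih hL]

lemma IsPathFrom.node_eq_and_le_of_horizontal (hS : S.Valid) {u v : ℤ} {L : List S.Arr}
    (h : IsPathFrom u v L) (hhor : ∀ f ∈ L, S.HorArrow (S.asrc f) (S.atgt f)) {w : ℤ}
    (hw : w ∈ L.map S.asrc ∨ w = v) : S.node w = S.node u ∧ w ≤ u := by
  induction L generalizing u with
  | nil => simp_all
  | cons f L ih =>
    obtain ⟨rfl, hL⟩ := h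
    have hf := hhor f List.mem_cons_self
    simp only [List.map_cons, List.mem_cons, or_assoc] at hw
    rcases hw with rfl | hw
    · exact ⟨rfl, le_rfl⟩
    · obtain ⟨hnode, hle⟩ := ih hL (fun f' hf' => hhor f' (List.mem_cons_of_mem f hf')) hw
      exact ⟨hnode.trans (hf.node_eq hS).symm, hle.trans (hf.lt hS).le⟩

lemma IsPathFrom.nodup_of_horizontal (hS : S.Valid) {u v : ℤ} {L : List S.Arr}
    (h : IsPathFrom u v L) (hhor : ∀ f ∈ L, S.HorArrow (S.asrc f) (S.atgt f)) :
    (L.map S.asrc).Nodup := by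
  induction L generalizing u with
  | nil => exact List.nodup_nil
  | cons f L ih =>
    obtain ⟨rfl, hL⟩ := h
    have hhorL : ∀ f' ∈ L, S.HorArrow (S.asrc f') (S.atgt f') :=
      fun f' hf' => hhor f' (List.mem_cons_of_mem f hf')
    refine List.nodup_cons.2 ⟨fun hf => ?_, ih hL hhorL⟩
    have hle := (hL.node_eq_and_le_of_horizontal hS hhorL (Or.inl hf)).2
    exact (hhor f List.mem_cons_self).lt hS |>.not_ge hle

-- Horizontal arrows strictly decrease, so a cycle cannot consist of them alone.
lemma IsCycList.exists_inclArrow (hS : S.Valid) {C : List S.Arr} (hC : S.IsCycList C) :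
    ∃ f ∈ C, S.InclArrow (S.asrc f) (S.atgt f) := by
  by_contra! hno
  have hhor : ∀ f ∈ C, S.HorArrow (S.asrc f) (S.atgt f) :=
    fun f hf => (f.2 : S.Arrow _ _).resolve_right (hno f hf)
  obtain ⟨g, L, rfl⟩ := List.exists_cons_of_ne_nil hC.1
  have hL := isCycList_cons_iff.1 hC
  have hle := (hL.node_eq_and_le_of_horizontal hS
    (fun f hf => hhor f (List.mem_cons_of_mem g hf)) (Or.inr rfl)).2
  exact ((hhor g List.mem_cons_self).lt hS).not_ge hle

lemma IsCycList.exists_inclArrow_max_asrc (hS : S.Valid) {C : List S.Arr}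
    (hC : S.IsCycList C) :
    ∃ g ∈ C, S.InclArrow (S.asrc g) (S.atgt g) ∧
      ∀ f ∈ C, S.InclArrow (S.asrc f) (S.atgt f) → S.asrc f ≤ S.asrc g := by
  classical
  obtain ⟨f, hfC, hf⟩ := hC.exists_inclArrow hS
  obtain ⟨g, hg, hmax⟩ := Finset.exists_max_image
    {f ∈ C.toFinset | S.InclArrow (S.asrc f) (S.atgt f)} S.asrc ⟨f, by simp [hfC, hf]⟩
  simp only [Finset.mem_filter, List.mem_toFinset] at hg hmax
  exact ⟨g, hg.1, hg.2, fun f hfC hf => hmax f ⟨hfC, hf⟩⟩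

/-- Together with an inclined arrow `x → y` and the inclined arrow `t → x`, the horizontal
path `L` from `y` down to `t` bounds a face. -/
structure IsDescent (x y t : ℤ) (L : List S.Arr) : Prop where
  isPathFrom : IsPathFrom y t L
  horizontal : ∀ f ∈ L, S.HorArrow (S.asrc f) (S.atgt f)
  lt_asrc : ∀ f ∈ L, x < S.asrc f
  lt : t < x

lemma exists_isDescent (hS : S.Valid) {x y : ℤ} {P : List S.Arr} (hP : IsPathFrom y x P)
    (hxy : x < y) (hnode : S.node y ≠ S.node x)
    (hmax : ∀ f ∈ P, S.InclArrow (S.asrc f) (S.atgt f) → S.asrc f ≤ x) :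
    ∃ L Q t, P = L ++ Q ∧ IsDescent x y t L ∧ IsPathFrom t x Q := by
  induction P generalizing y with
  | nil => exact absurd (isPathFrom_nil.1 hP).symm hxy.ne
  | cons a P ih =>
    obtain ⟨rfl, hP⟩ := hP
    have ha : S.HorArrow (S.asrc a) (S.atgt a) :=
      (a.2 : S.Arrow _ _).resolve_right fun hi => (hmax a List.mem_cons_self hi).not_gt hxy
    have hnode' : S.node (S.atgt a) ≠ S.node x := ha.node_eq hS ▸ hnode
    rcases lt_trichotomy (S.atgt a) x with hlt | heq | hgt
    · exact ⟨[a], P, S.atgt a, rfl,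
        ⟨⟨rfl, rfl⟩, by simpa using ha, by simpa using hxy, hlt⟩, hP⟩
    · exact absurd (congrArg S.node heq) hnode'
    · obtain ⟨L, Q, t, rfl, hd, hQ⟩ :=
        ih hP hgt hnode' fun f hf => hmax f (List.mem_cons_of_mem a hf)
      refine ⟨a :: L, Q, t, rfl, ⟨⟨rfl, hd.isPathFrom⟩, ?_, ?_, hd.lt⟩, hQ⟩
      · simpa [ha] using hd.horizontal
      · simpa [hxy] using hd.lt_asrc

namespace IsDescent

variable {x y t : ℤ} {L : List S.Arr}

lemma exists_atgt_eq (hd : IsDescent x y t L) (hxy : x < y) : ∃ f ∈ L, S.atgt f = t := by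
  rcases hd.isPathFrom.mem_asrc_or_eq_iff.1 (Or.inr rfl) with hty | ht
  · exact absurd hty (hd.lt.trans hxy).ne
  · simpa using ht

lemma inclArrow (hS : S.Valid) (hd : IsDescent x y t L) (hxy : S.InclArrow x y) :
    S.InclArrow t x := by
  obtain ⟨hIx, -, hadj, hlt, hysx, -⟩ := hxy
  obtain ⟨f, hfL, rfl⟩ := hd.exists_atgt_eq hlt
  obtain ⟨hIt, hsucc, -⟩ := hd.horizontal f hfL
  obtain ⟨hnode, hle⟩ := hd.isPathFrom.node_eq_and_le_of_horizontal hS hd.horizontal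
    (Or.inl (List.mem_map_of_mem hfL))
  refine ⟨hIt, hIx, ?_, hd.lt, hsucc ▸ hd.lt_asrc f hfL, by omega⟩
  rw [← (hd.horizontal f hfL).node_eq hS, hnode]
  exact hadj.symm

-- Apart from `x`, all vertices lie on the string of `y` between `t` and `y`: a horizontal chord
-- is then a step of `L`, and an inclined one must have `x` as an end, which forces `g` or `e`.
lemma chordless (hS : S.Valid) (hd : IsDescent x y t L) (hxy : S.InclArrow x y)
    {g e : S.Arr} (hgs : S.asrc g = x) (hgt : S.atgt g = y) (hes : S.asrc e = t)
    (het : S.atgt e = x) (a b : ℤ) (ha : a ∈ (e :: g :: L).map S.asrc)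
    (hb : b ∈ (e :: g :: L).map S.asrc) (hab : S.Arrow a b) :
    ∃ f ∈ e :: g :: L, S.asrc f = a ∧ S.atgt f = b := by
  have hW : ∀ w, w ∈ L.map S.asrc ∨ w = t → S.node w = S.node y ∧ w ≤ y :=
    fun w hw => hd.isPathFrom.node_eq_and_le_of_horizontal hS hd.horizontal hw
  have hmem : ∀ w, w ∈ (e :: g :: L).map S.asrc ↔ w = x ∨ w ∈ L.map S.asrc ∨ w = t := by
    intro w
    simp only [List.map_cons, List.mem_cons, hes, hgs]
    tauto
  obtain ⟨-, -, hadjxy, -, hysx, -⟩ := hxy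
  have hnxy : S.node x ≠ S.node y := hadjxy.ne
  rw [hmem] at ha hb
  rcases hab with hab | ⟨-, -, hadj, hlt, -, hsucc⟩
  · have hba := hab.lt hS
    have hnode := hab.node_eq hS
    rcases ha with hax | haW <;> rcases hb with hbx | hbW
    · omega
    · exact (hnxy (by rw [← hax, hnode, (hW b hbW).1])).elim
    · exact (hnxy (by rw [← hbx, ← hnode, (hW a haW).1])).elim
    rcases hd.isPathFrom.mem_asrc_or_eq_iff.1 hbW with hby | hbt
    · exact absurd (hW a haW).2 (by omega)
    obtain ⟨f, hfL, rfl⟩ := List.mem_map.1 hbt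
    exact ⟨f, by simp [hfL], (hd.horizontal f hfL).2.1.trans hab.2.1.symm, rfl⟩
  · rcases ha with hax | haW <;> rcases hb with hbx | hbW
    · omega
    · rcases hd.isPathFrom.mem_asrc_or_eq_iff.1 hbW with hby | hbt
      · exact ⟨g, by simp, hgs.trans hax.symm, hgt.trans hby.symm⟩
      obtain ⟨f, hfL, rfl⟩ := List.mem_map.1 hbt
      have hle := (hW _ (Or.inl (List.mem_map_of_mem hfL))).2
      have hfsucc := (hd.horizontal f hfL).2.1
      rw [hax] at hsucc
      omega
    · rcases haW with haL | hat
      · obtain ⟨f, hfL, rfl⟩ := List.mem_map.1 haL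
        have := hd.lt_asrc f hfL
        omega
      · exact ⟨e, by simp, hes.trans hat.symm, het.trans hbx.symm⟩
    · exact absurd hadj (by rw [(hW a haW).1, (hW b hbW).1]; exact S.Γ.irrefl)

lemma isFaceList (hS : S.Valid) (hd : IsDescent x y t L) (hxy : S.InclArrow x y)
    {g e : S.Arr} (hgs : S.asrc g = x) (hgt : S.atgt g = y) (hes : S.asrc e = t)
    (het : S.atgt e = x) : S.IsFaceList (e :: g :: L) := by
  refine ⟨isCycList_cons_iff.2 ⟨hgs.trans het.symm, hgt ▸ hes ▸ hd.isPathFrom⟩, ?_,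
    hd.chordless hS hxy hgs hgt hes het⟩
  have hx : x ∉ L.map S.asrc := by
    simpa using fun f hf => (hd.lt_asrc f hf).ne'
  have ht : t ∉ L.map S.asrc := by
    simpa using fun f hf => (hd.lt.trans (hd.lt_asrc f hf)).ne'
  simp only [List.map_cons, hes, hgs, List.nodup_cons, List.mem_cons, not_or]
  exact ⟨⟨hd.lt.ne, ht⟩, hx, hd.isPathFrom.nodup_of_horizontal hS hd.horizontal⟩

end IsDescent

lemma IsPathFrom.eq_singleton_of_mem {u v : ℤ} {P Q : List S.Arr} (hP : IsPathFrom u v P)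
    (hPne : P ≠ []) (hQ : IsPathFrom v u Q) (hnd : ((P ++ Q).map S.asrc).Nodup) {e : S.Arr}
    (he : e ∈ Q) (hes : S.asrc e = v) (het : S.atgt e = u) : Q = [e] := by
  have hinj := List.inj_on_of_nodup_map hnd
  obtain ⟨a, Q, rfl⟩ := List.exists_cons_of_ne_nil (List.ne_nil_of_mem he)
  obtain ⟨p, P, rfl⟩ := List.exists_cons_of_ne_nil hPne
  obtain ⟨has, hQ⟩ := hQ
  obtain rfl : e = a := hinj (by simp [he]) (by simp) (hes.trans has.symm)
  cases Q with
  | nil => rfl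
  | cons b Q =>
    obtain rfl : b = p := hinj (by simp) (by simp) (hQ.1.trans (het.trans hP.1.symm))
    exact absurd (by simp)
      (List.disjoint_of_nodup_append (hnd.of_map S.asrc) List.mem_cons_self)

end

theorem simple_cycle_differentiable (hS : S.Valid)
    (C : List S.Arr) (hC : S.IsCycList C)
    (hsimple : (C.map S.asrc).Nodup)
    (hnotface : ¬ S.IsFaceList C) :
    ∃ (F : List S.Arr) (e : S.Arr) (p : List S.Arr) (jF jC : ℕ),
      S.IsFaceList F ∧ F.rotate jF = e :: p ∧ e ∉ C ∧ p <:+: C.rotate jC := by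
  obtain ⟨g, hgC, hg, hgmax⟩ := hC.exists_inclArrow_max_asrc hS
  obtain ⟨n, rest, hrot⟩ := List.exists_rotate_eq_cons_of_mem hgC
  have hrest : IsPathFrom (S.atgt g) (S.asrc g) rest :=
    isCycList_cons_iff.1 (hrot ▸ hC.rotate n)
  have hmem : ∀ f ∈ rest, f ∈ C := fun f hf =>
    List.mem_rotate.1 (hrot ▸ List.mem_cons_of_mem g hf)
  obtain ⟨L, Q, t, rfl, hd, hQ⟩ := exists_isDescent hS hrest hg.2.2.2.1 hg.2.2.1.ne'
    fun f hf => hgmax f (hmem f hf)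
  let e : S.Arr := ⟨(t, S.asrc g), Or.inr (hd.inclArrow hS hg)⟩
  have hF : S.IsFaceList (e :: g :: L) := hd.isFaceList hS hg rfl rfl rfl rfl
  by_cases heC : e ∈ C
  · have heQ : e ∈ Q := by
      have he : e ∈ g :: (L ++ Q) := hrot ▸ List.mem_rotate.2 heC
      rcases List.mem_cons.1 he with heg | he
      · exact absurd (congrArg S.asrc heg) hd.lt.ne
      · exact (List.mem_append.1 he).resolve_left fun heL => (hd.lt_asrc e heL).not_gt hd.lt
    have hnd : ((g :: L ++ Q).map S.asrc).Nodup := by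
      rwa [List.cons_append, ← hrot, List.map_rotate, List.nodup_rotate]
    obtain rfl : Q = [e] := (isPathFrom_cons.2 ⟨rfl, hd.isPathFrom⟩).eq_singleton_of_mem
      (List.cons_ne_nil g L) hQ hnd heQ rfl rfl
    have hCF : C ~r e :: g :: L :=
      List.IsRotated.trans ⟨n, hrot⟩ (List.isRotated_append (l := g :: L) (l' := [e]))
    exact absurd (hF.isRotated hCF.symm) hnotface
  · exact ⟨e :: g :: L, e, g :: L, 0, n, hF, List.rotate_zero _, heC,
      hrot ▸ (List.prefix_append _ Q).isInfix⟩

end BFZe
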